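/- arXiv:2510.06934 — 2 statements merged into one kernel-verified Lean document; each statement's English description precedes it below -/
import Mathlib

section
/- For every finite label set X, the graph exponential map exp : A_X → 1 + A_X, defined by exp(a) := 1 + Σ_g (ℓ_g/|g|!) · g(a,…,a) with the sum over all isomorphism classes of directed simple graphs g, is a bijection. -/
open scoped Classical

namespace LieGraph

/-- Bare data of a finite `X`-labelled directed graph on the vertex set `Fin n`. -/
structure PreG (X : Type) where
  n : ℕ
  R : Fin n → Fin n → Prop
  label : Fin n → X

/-- Symmetrisation of the edge relation. -/
def PreG.sym {X : Type} (G : PreG X) : Fin G.n → Fin G.n → Prop :=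
  fun u v => G.R u v ∨ G.R v u

/-- `G` is an `X`-labelled directed simple graph: nonempty vertex set, irreflexive,
antisymmetric, acyclic (no directed cycle) and weakly connected edge relation. -/
def IsDS {X : Type} (G : PreG X) : Prop :=
  0 < G.n ∧ (∀ v, ¬ G.R v v) ∧ (∀ a b, G.R a b → ¬ G.R b a) ∧
    (∀ v, ¬ Relation.TransGen G.R v v) ∧
    ∀ a b, Relation.ReflTransGen G.sym a b

/-- `X`-labelled directed simple graphs. -/
abbrev LDG (X : Type) : Type := {G : PreG X // IsDS G}

/-- Label-preserving isomorphism of labelled graphs. -/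
def PIso {X : Type} (G H : PreG X) : Prop :=
  ∃ e : Fin G.n ≃ Fin H.n,
    (∀ a b, G.R a b ↔ H.R (e a) (e b)) ∧ ∀ v, H.label (e v) = G.label v

def LIso {X : Type} (G H : LDG X) : Prop := PIso G.1 H.1

/-- Isomorphism classes of `X`-labelled directed simple graphs. -/
abbrev LClass (X : Type) : Type := Quot (LIso (X := X))

/-- The space `A_X` of formal series indexed by iso classes of `X`-labelled
directed simple graphs. -/
abbrev AX (X : Type) : Type := LClass X → ℚ

/-- Induced subgraph of `G` on a finite set `S` of vertices, transported to `Fin S.card`. -/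
def induced {X : Type} (G : PreG X) (S : Finset (Fin G.n)) : PreG X where
  n := S.card
  R a b := G.R (S.orderIsoOfFin rfl a).1 (S.orderIsoOfFin rfl b).1
  label a := G.label (S.orderIsoOfFin rfl a).1

/-- Evaluate the series `f` at the induced subgraph of `G` on `S` when the latter is a
directed simple graph, and return `0` otherwise. -/
noncomputable def evalAt {X : Type} (f : AX X) (G : PreG X) (S : Finset (Fin G.n)) : ℚ :=
  if h : IsDS (induced G S) then f (Quot.mk _ ⟨induced G S, h⟩) else 0

/-- Coefficient at `H` of the substitution of the series `a 1, …, a n` in the graph with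
vertex set `Fin n` and edge relation `R`: the sum, over all ordered partitions of the
vertex set of `H` into `n` nonempty blocks whose contraction (merging parallel edges)
gives `R`, of the product of the coefficients of `a i` at the induced block subgraphs. -/
noncomputable def subCoeff {X : Type} {n : ℕ} (R : Fin n → Fin n → Prop)
    (a : Fin n → AX X) (H : PreG X) : ℚ :=
  ∑ p : Fin H.n → Fin n,
    if (Function.Surjective p ∧
        ∀ i j : Fin n, R i j ↔ i ≠ j ∧ ∃ u v, p u = i ∧ p v = j ∧ H.R u v) then
      ∏ i : Fin n, evalAt (a i) H (Finset.univ.filter fun v => p v = i)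
    else 0

/-- Bare data of a `k`-leveled graph. -/
structure PreLev (k : ℕ) where
  n : ℕ
  R : Fin n → Fin n → Prop
  level : Fin n → Fin k

def PreLev.sym {k : ℕ} (G : PreLev k) : Fin G.n → Fin G.n → Prop :=
  fun u v => G.R u v ∨ G.R v u

/-- A `k`-leveled directed simple graph: a directed simple graph whose vertices sit on `k`
ordered levels so that every edge goes from a vertex on an upper level to a vertex on a
strictly lower level. -/
def IsLev {k : ℕ} (G : PreLev k) : Prop :=
  0 < G.n ∧ (∀ v, ¬ G.R v v) ∧ (∀ a b, G.R a b → ¬ G.R b a) ∧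
    (∀ v, ¬ Relation.TransGen G.R v v) ∧
    (∀ a b, Relation.ReflTransGen G.sym a b) ∧
    ∀ a b, G.R a b → G.level b < G.level a

abbrev LevG (k : ℕ) : Type := {G : PreLev k // IsLev G}

/-- Level-preserving isomorphism of leveled graphs. -/
def LevPIso {k : ℕ} (G H : PreLev k) : Prop :=
  ∃ e : Fin G.n ≃ Fin H.n,
    (∀ a b, G.R a b ↔ H.R (e a) (e b)) ∧ ∀ v, H.level (e v) = G.level v

def LevIso {k : ℕ} (G H : LevG k) : Prop := LevPIso G.1 H.1

/-- Isomorphism classes of `k`-leveled directed simple graphs. -/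
abbrev LevClass (k : ℕ) : Type := Quot (LevIso (k := k))

/-- Automorphisms of a leveled graph: permutations of the vertices preserving both the
edge relation and the levels. -/
def LevAut {k : ℕ} (G : PreLev k) : Type :=
  {e : Equiv.Perm (Fin G.n) //
    (∀ a b, G.R a b ↔ G.R (e a) (e b)) ∧ ∀ v, G.level (e v) = G.level v}

/-- Coefficient at `H` of `Σ_g (1/|Aut g|) · g(vals ∘ level)`, the sum running over all
isomorphism classes of `k`-leveled directed simple graphs, a vertex on level `l` being
substituted with the series `vals l`. -/
noncomputable def levSum {X : Type} {k : ℕ} (vals : Fin k → AX X) (H : PreG X) : ℚ :=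
  ∑ᶠ q : LevClass k,
    ((Nat.card (LevAut q.out.1) : ℚ))⁻¹ *
      subCoeff q.out.1.R (fun i => vals (q.out.1.level i)) H

/-- The product `⊙` of `1 + A_X`, written on the non-unit components:
`(1+a) ⊙ (1+b) = 1 + odot a b`. Bottom-level (level `0`) vertices are substituted
with `a`, top-level (level `1`) vertices with `b`. -/
noncomputable def odot {X : Type} (a b : AX X) : AX X :=
  fun hq => levSum ![a, b] hq.out.1


/-- `ℓ_g`: the number of total levelisations of the graph `G`, i.e. of placements of its
`n` vertices on `n` ordered levels, one vertex per level, such that every edge goes from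
a vertex on an upper level to a vertex on a strictly lower level. -/
noncomputable def numLev {X : Type} (G : PreG X) : ℕ :=
  Nat.card {e : Fin G.n ≃ Fin G.n // ∀ u v, G.R u v → e v < e u}

/-- The graph exponential map `exp : A_X → 1 + A_X`,
`exp(a) = 1 + Σ_g (ℓ_g/|g|!) · g(a,…,a)` (written here on the non-unit component), the
sum running over all isomorphism classes of (unlabelled, i.e. `Unit`-labelled) directed
simple graphs `g`, with every vertex substituted with `a`. -/
noncomputable def expMap {X : Type} (a : AX X) : AX X :=
  fun hq => ∑ᶠ q : LClass Unit,
    ((numLev q.out.1 : ℚ) / (Nat.factorial q.out.1.n : ℚ)) *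
      subCoeff q.out.1.R (fun _ => a) hq.out.1

/-!
The coefficient of `exp a` at a graph `h` is `a h`, contributed by the one-vertex graph
(for which `ℓ = 1` and `|g|! = 1`), plus terms that involve coefficients of `a` only at graphs
with fewer vertices than `h`: every other graph `g` has at least two vertices, so the
substitution `g(a, …, a)` splits `h` into at least two nonempty, hence proper, blocks.
Thus `exp - id` is strictly triangular with respect to the number of vertices, and `exp` is
inverted coefficient by coefficient by well-founded recursion on that number.
-/

section Unitriangular

variable {ι M : Type*} [AddCommGroup M] {r : ι → ι → Prop} {F : (ι → M) → ι → M}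

def IsUnitriangular (r : ι → ι → Prop) (F : (ι → M) → ι → M) : Prop :=
  ∀ a a' i, (∀ j, r j i → a j = a' j) → F a i - a i = F a' i - a' i

theorem IsUnitriangular.injective (hF : IsUnitriangular r F) (hr : WellFounded r) :
    Function.Injective F := by
  intro a a' h
  funext i
  induction i using hr.induction with
  | _ i ih =>
    have := hF a a' i ih
    rwa [h, sub_right_inj] at this

theorem IsUnitriangular.surjective (hF : IsUnitriangular r F) (hr : WellFounded r) :
    Function.Surjective F := by
  intro b
  let below (i : ι) (g : ∀ j, r j i → M) : ι → M := fun j => if hj : r j i then g j hj else 0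
  let a : ι → M := hr.fix fun i g => b i - (F (below i g) i - below i g i)
  refine ⟨a, funext fun i => ?_⟩
  have ha : a i = b i - (F (below i fun j _ => a j) i - below i (fun j _ => a j) i) :=
    hr.fix_eq _ i
  have hdiff := hF a (below i fun j _ => a j) i fun j hj => by simp [below, hj]
  calc F a i = (F a i - a i) + a i := (sub_add_cancel _ _).symm
    _ = b i := by rw [hdiff, ha, add_sub_cancel]

theorem IsUnitriangular.bijective (hF : IsUnitriangular r F) (hr : WellFounded r) :
    Function.Bijective F :=
  ⟨hF.injective hr, hF.surjective hr⟩

end Unitriangular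

section Iso

variable {X : Type}

theorem PIso.refl (G : PreG X) : PIso G G :=
  ⟨Equiv.refl _, fun _ _ => Iff.rfl, fun _ => rfl⟩

theorem PIso.symm {G H : PreG X} (h : PIso G H) : PIso H G := by
  obtain ⟨e, hR, hl⟩ := h
  refine ⟨e.symm, fun a b => ?_, fun v => ?_⟩
  · rw [hR (e.symm a) (e.symm b), e.apply_symm_apply, e.apply_symm_apply]
  · rw [← hl (e.symm v), e.apply_symm_apply]

theorem PIso.trans {G H K : PreG X} (h₁ : PIso G H) (h₂ : PIso H K) : PIso G K := by
  obtain ⟨e, hR, hl⟩ := h₁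
  obtain ⟨f, fR, fl⟩ := h₂
  exact ⟨e.trans f, fun a b => (hR a b).trans (fR (e a) (e b)), fun v => (fl (e v)).trans (hl v)⟩

theorem PIso.n_eq {G H : PreG X} (h : PIso G H) : G.n = H.n := by
  obtain ⟨e, -, -⟩ := h
  simpa using Fintype.card_congr e

theorem IsDS.of_piso {G H : PreG X} (hG : IsDS G) (h : PIso G H) : IsDS H := by
  obtain ⟨e, hR, -⟩ := h
  have hR' : ∀ a b, H.R a b → G.R (e.symm a) (e.symm b) := fun a b hab =>
    (hR _ _).mpr (by simpa using hab)
  obtain ⟨hpos, hirr, hanti, hacyc, hconn⟩ := hG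
  refine ⟨(e ⟨0, hpos⟩).pos, fun v hv => hirr _ (hR' v v hv),
    fun a b hab hba => hanti _ _ (hR' a b hab) (hR' b a hba),
    fun v hv => hacyc _ (Relation.TransGen.lift e.symm hR' v v hv), fun a b => ?_⟩
  simpa [Function.onFun] using Relation.ReflTransGen.lift (p := H.sym) e
    (fun u v huv => (Or.imp (hR u v).mp (hR v u).mp huv : H.sym (e u) (e v))) _ _
    (hconn (e.symm a) (e.symm b))

theorem liso_equivalence : Equivalence (LIso (X := X)) :=
  ⟨fun G => PIso.refl G.1, PIso.symm, PIso.trans⟩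

theorem liso_out_mk (G : LDG X) : LIso (Quot.mk LIso G).out G :=
  (Equivalence.eqvGen_iff liso_equivalence).mp (Quot.eqvGen_exact (Quot.out_eq _))

theorem subsingleton_setOf_piso_out (G : PreG X) :
    {c : LClass X | PIso c.out.1 G}.Subsingleton := by
  intro c hc c' hc'
  rw [← Quot.out_eq c, ← Quot.out_eq c']
  exact Quot.sound (PIso.trans hc (PIso.symm hc'))

noncomputable def size (c : LClass X) : ℕ := c.out.1.n

theorem size_mk (G : LDG X) : size (Quot.mk LIso G) = G.1.n :=
  PIso.n_eq (liso_out_mk G)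

end Iso

section Substitution

variable {X : Type}

theorem piso_induced_univ (G : PreG X) : PIso (induced G Finset.univ) G := by
  refine ⟨((Finset.univ : Finset (Fin G.n)).orderIsoOfFin rfl).toEquiv.trans
    (Equiv.subtypeUnivEquiv Finset.mem_univ),
    fun _ _ => ?_, fun _ => ?_⟩ <;> rfl

theorem evalAt_univ (a : AX X) (G : LDG X) :
    evalAt a G.1 Finset.univ = a (Quot.mk _ G) := by
  have hG := piso_induced_univ G.1
  rw [evalAt, dif_pos (G.2.of_piso hG.symm)]
  exact congrArg a (Quot.sound hG)

theorem evalAt_congr {a a' : AX X} (G : PreG X) (S : Finset (Fin G.n))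
    (h : ∀ c, size c = S.card → a c = a' c) : evalAt a G S = evalAt a' G S := by
  unfold evalAt
  split
  · exact h _ (size_mk _)
  · rfl

theorem card_fiber_lt_of_surjective {α β : Type*} [Fintype α] [DecidableEq β] [Nontrivial β]
    {p : α → β} (hp : Function.Surjective p) (i : β) :
    (Finset.univ.filter fun v => p v = i).card < Fintype.card α := by
  obtain ⟨j, hj⟩ := exists_ne i
  obtain ⟨v, rfl⟩ := hp j
  exact Finset.card_lt_univ_of_notMem (x := v) (by simpa using hj)

theorem subCoeff_congr {n : ℕ} (hn : 2 ≤ n) (R : Fin n → Fin n → Prop) {a a' : Fin n → AX X}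
    (H : PreG X) (h : ∀ i c, size c < H.n → a i c = a' i c) :
    subCoeff R a H = subCoeff R a' H := by
  have : Nontrivial (Fin n) := Fin.nontrivial_iff_two_le.mpr hn
  refine Finset.sum_congr rfl fun p _ => ?_
  split_ifs with hp
  · refine Finset.prod_congr rfl fun i _ => evalAt_congr _ _ fun c hc => h i c ?_
    simpa [hc] using card_fiber_lt_of_surjective hp.1 i
  · rfl

theorem subCoeff_of_n_eq_one {n : ℕ} (hn : n = 1) {R : Fin n → Fin n → Prop}
    (hR : ∀ i, ¬ R i i) (a : Fin n → AX X) (G : LDG X) (i : Fin n) :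
    subCoeff R a G.1 = a i (Quot.mk _ G) := by
  subst hn
  have hpos := G.2.1
  rw [subCoeff, Fintype.sum_unique, if_pos, Fintype.prod_unique, Subsingleton.elim default i]
  · simpa [Subsingleton.elim _ i] using evalAt_univ (a i) G
  · refine ⟨fun j => ⟨⟨0, hpos⟩, Subsingleton.elim _ _⟩, fun j k => ?_⟩
    rw [Subsingleton.elim j k]
    simp [hR]

def contractGraph (H : PreG X) {m : ℕ} (p : Fin H.n → Fin m) : PreG Unit where
  n := m
  R i j := i ≠ j ∧ ∃ u v, p u = i ∧ p v = j ∧ H.R u v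
  label _ := ()

theorem exists_contractGraph_of_subCoeff_ne_zero {n : ℕ} {R : Fin n → Fin n → Prop}
    {a : Fin n → AX X} {H : PreG X} (h : subCoeff R a H ≠ 0) :
    ∃ p : Fin H.n → Fin n, Function.Surjective p ∧ ∀ i j, R i j ↔ (contractGraph H p).R i j := by
  by_contra hne
  exact h (Finset.sum_eq_zero fun p _ => if_neg fun hp => hne ⟨p, hp⟩)

end Substitution

section Exponential

variable {X : Type}

theorem numLev_of_n_eq_one (G : PreG X) (hn : G.n = 1) (hR : ∀ v, ¬ G.R v v) :
    numLev G = 1 := by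
  have : Subsingleton (Fin G.n) := by rw [hn]; infer_instance
  rw [numLev, Nat.card_eq_one_iff_unique]
  refine ⟨⟨fun e f => Subtype.ext (Equiv.ext fun _ => Subsingleton.elim _ _)⟩,
    ⟨⟨Equiv.refl _, fun u v huv => ?_⟩⟩⟩
  rw [Subsingleton.elim u v] at huv
  exact (hR v huv).elim

def pointGraph : PreG Unit where
  n := 1
  R _ _ := False
  label _ := ()

theorem isDS_pointGraph : IsDS pointGraph := by
  refine ⟨one_pos, fun _ h => h, fun _ _ h => h.elim, fun v h => ?_, fun a b => ?_⟩
  · cases h with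
    | single h => exact h
    | tail _ h => exact h
  · rw [Subsingleton.elim (α := Fin 1) a b]

noncomputable def pointClass : LClass Unit := Quot.mk _ ⟨pointGraph, isDS_pointGraph⟩

theorem eq_pointClass_of_size_eq_one {q : LClass Unit} (hq : size q = 1) : q = pointClass := by
  refine subsingleton_setOf_piso_out pointGraph ?_ (liso_out_mk _)
  have : Subsingleton (Fin q.out.1.n) := by rw [← size, hq]; infer_instance
  refine ⟨finCongr hq, fun a b => iff_of_false (fun hab => ?_) not_false, fun _ => rfl⟩
  rw [Subsingleton.elim a b] at hab
  exact q.out.2.2.1 b hab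

noncomputable def expTerm (a : AX X) (H : PreG X) (q : LClass Unit) : ℚ :=
  ((numLev q.out.1 : ℚ) / (Nat.factorial q.out.1.n : ℚ)) * subCoeff q.out.1.R (fun _ => a) H

theorem expTerm_pointClass (a : AX X) (c : LClass X) : expTerm a c.out.1 pointClass = a c := by
  have hn : pointClass.out.1.n = 1 := size_mk _
  rw [expTerm, numLev_of_n_eq_one _ hn pointClass.out.2.2.1,
    subCoeff_of_n_eq_one hn pointClass.out.2.2.1 _ c.out ⟨0, by omega⟩, Quot.out_eq]
  simp [hn]

theorem expTerm_congr {q : LClass Unit} (hq : q ≠ pointClass) {a a' : AX X} {H : PreG X}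
    (h : ∀ c, size c < H.n → a c = a' c) : expTerm a H q = expTerm a' H q := by
  have h2 : 2 ≤ q.out.1.n := by
    by_contra hlt
    have := q.out.2.1
    exact hq (eq_pointClass_of_size_eq_one (by unfold size; omega))
  rw [expTerm, expTerm, subCoeff_congr h2 _ _ fun _ => h]

-- A graph `q` with a nonzero term is the contraction of `H` along some partition of its vertices.
theorem expTerm_support_finite (a : AX X) (H : PreG X) :
    (Function.support (expTerm a H)).Finite := by
  refine ((Set.finite_Iic H.n).biUnion fun m _ => Set.finite_iUnion fun p : Fin H.n → Fin m =>
    (subsingleton_setOf_piso_out (contractGraph H p)).finite).subset fun q hq => ?_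
  obtain ⟨p, hsurj, hR⟩ := exists_contractGraph_of_subCoeff_ne_zero (right_ne_zero_of_mul hq)
  simp only [Set.mem_iUnion, Set.mem_Iic]
  exact ⟨q.out.1.n, by simpa using Fintype.card_le_of_surjective p hsurj, p,
    Equiv.refl _, hR, fun _ => rfl⟩

theorem expMap_isUnitriangular :
    IsUnitriangular (fun c c' : LClass X => size c < size c') expMap := by
  intro a a' c h
  rw [sub_eq_sub_iff_sub_eq_sub]
  change ∑ᶠ q, expTerm a c.out.1 q - ∑ᶠ q, expTerm a' c.out.1 q = a c - a' c
  rw [← finsum_sub_distrib (expTerm_support_finite _ _) (expTerm_support_finite _ _),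
    finsum_eq_single _ pointClass fun q hq => sub_eq_zero.mpr (expTerm_congr hq h),
    expTerm_pointClass, expTerm_pointClass]

end Exponential

theorem statement2_general (X : Type) :
    Function.Bijective (expMap (X := X)) :=
  expMap_isUnitriangular.bijective (InvImage.wf size wellFounded_lt)

/-- For every finite label set `X`, the graph exponential map
`exp : A_X → 1 + A_X`, `exp(a) := 1 + Σ_g (ℓ_g/|g|!) · g(a,…,a)` with the sum over all
isomorphism classes of directed simple graphs `g`, is a bijection. -/
theorem statement2 (X : Type) [Fintype X] :
    Function.Bijective (expMap (X := X)) :=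
  statement2_general X

end LieGraph
end

section
/- For every real number c with 1 < c < √2 there exists N such that for all n ≥ N, the number of directed simple graphs on n labelled vertices (relations on {1,…,n} that are irreflexive, antisymmetric, acyclic, and weakly connected) is at least c^{n²}. In particular, there exists a constant c > 1 such that this number is at least c^{n²} for all sufficiently large n. -/
/-!
Fix vertex `0` of `Fin (m + 1)` and orient every edge from the smaller to the larger vertex.
Joining `0` to every other vertex and choosing an arbitrary set of edges among the remaining
`m` vertices always gives a directed simple graph: the orientation makes it acyclic and the
star at `0` makes it connected. This gives `2 ^ m.choose 2` graphs, and
`2 ^ ((n - 1).choose 2) ≈ (√2) ^ (n ^ 2 - 3 n)` eventually dominates `c ^ (n ^ 2)` for `c < √2`.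
-/

/-- `R` is (the edge relation of) a directed simple graph on `n` labelled vertices:
irreflexive, antisymmetric, acyclic and weakly connected. -/
def IsDSrel (n : ℕ) (R : Fin n → Fin n → Prop) : Prop :=
  (∀ v, ¬ R v v) ∧ (∀ a b, R a b → ¬ R b a) ∧
    (∀ v, ¬ Relation.TransGen R v v) ∧
    ∀ a b : Fin n, Relation.ReflTransGen (fun u v => R u v ∨ R v u) a b

open Filter Finset Relation

lemma isDSrel_of_lt_of_root {n : ℕ} {R : Fin n → Fin n → Prop} (hlt : ∀ a b, R a b → a < b)
    (r : Fin n) (hr : ∀ b, r ≠ b → R r b) : IsDSrel n R := by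
  refine ⟨fun v hv => (hlt v v hv).false, fun a b hab hba => (hlt a b hab).asymm (hlt b a hba),
    fun v hv => ?_, fun a b => ?_⟩
  · have : TransGen (· < ·) v v := TransGen.mono hlt v v hv
    rw [transGen_eq_self] at this
    exact this.false
  · have toRoot : ∀ a, ReflTransGen (fun u v => R u v ∨ R v u) a r := fun a => by
      rcases eq_or_ne r a with rfl | h
      · rfl
      · exact .single (.inr (hr a h))
    have fromRoot : ∀ b, ReflTransGen (fun u v => R u v ∨ R v u) r b := fun b => by
      rcases eq_or_ne r b with rfl | h
      · rfl
      · exact .single (.inl (hr b h))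
    exact (toRoot a).trans (fromRoot b)

def coneRel {m : ℕ} (S : Finset (Fin (m + 1) × Fin (m + 1))) (a b : Fin (m + 1)) : Prop :=
  a < b ∧ (a = 0 ∨ (a, b) ∈ S)

lemma isDSrel_coneRel {m : ℕ} (S : Finset (Fin (m + 1) × Fin (m + 1))) :
    IsDSrel (m + 1) (coneRel S) :=
  isDSrel_of_lt_of_root (fun _ _ h => h.1) 0 fun _ hb =>
    ⟨Fin.pos_iff_ne_zero.2 hb.symm, .inl rfl⟩

def nonzeroPairs (m : ℕ) : Finset (Fin (m + 1) × Fin (m + 1)) :=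
  {x ∈ (univ.erase 0) ×ˢ (univ.erase 0) | x.1 < x.2}

lemma card_nonzeroPairs (m : ℕ) : #(nonzeroPairs m) = m.choose 2 := by
  rw [nonzeroPairs, card_product_filter_lt, card_erase_of_mem (mem_univ _), card_univ,
    Fintype.card_fin, Nat.add_sub_cancel]

lemma coneRel_injective {m : ℕ} {S T : Finset (Fin (m + 1) × Fin (m + 1))}
    (hS : S ⊆ nonzeroPairs m) (hT : T ⊆ nonzeroPairs m) (hST : coneRel S = coneRel T) : S = T := by
  have subset : ∀ S T, S ⊆ nonzeroPairs m → coneRel S = coneRel T → S ⊆ T := by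
    intro S T hS hST x hx
    obtain ⟨hmem, hlt⟩ := mem_filter.1 (hS hx)
    have h0 : x.1 ≠ 0 := (mem_erase.1 (mem_product.1 hmem).1).1
    have : coneRel T x.1 x.2 := hST ▸ ⟨hlt, .inr hx⟩
    exact this.2.resolve_left h0
  exact (subset S T hS hST).antisymm (subset T S hT hST.symm)

lemma two_pow_choose_two_le_card (m : ℕ) :
    2 ^ m.choose 2 ≤ Nat.card {R : Fin (m + 1) → Fin (m + 1) → Prop // IsDSrel (m + 1) R} := by
  let f : (nonzeroPairs m).powerset → {R // IsDSrel (m + 1) R} :=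
    fun S => ⟨coneRel S.1, isDSrel_coneRel S.1⟩
  have hf : Function.Injective f := fun S T h =>
    Subtype.ext <| coneRel_injective (mem_powerset.1 S.2) (mem_powerset.1 T.2)
      (congrArg Subtype.val h)
  calc 2 ^ m.choose 2 = Nat.card (nonzeroPairs m).powerset := by
        rw [Nat.card_eq_fintype_card, Fintype.card_coe, card_powerset, card_nonzeroPairs]
    _ ≤ _ := Nat.card_le_card_of_injective f hf

lemma sq_le_two_mul_choose_two_add (n : ℕ) : n ^ 2 ≤ 2 * (n - 1).choose 2 + 3 * n := by
  obtain _ | m := n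
  · simp
  · rw [Nat.add_sub_cancel, Nat.choose_two_right,
      Nat.two_mul_div_two_of_even (Nat.even_mul_pred_self m)]
    obtain _ | k := m
    · simp
    · rw [Nat.add_sub_cancel]
      nlinarith

lemma eventually_pow_mul_pow_sq_le {a b d : ℝ} (ha : 0 ≤ a) (hd : 0 < d) (hdb : d < b) :
    ∀ᶠ n : ℕ in atTop, a ^ n * d ^ (n ^ 2) ≤ b ^ (n ^ 2) := by
  have hb : 0 < b := hd.trans hdb
  have hgrowth := tendsto_pow_atTop_atTop_of_one_lt ((one_lt_div hd).2 hdb)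
  filter_upwards [hgrowth.eventually_ge_atTop a] with n hn
  have : a * d ^ n ≤ b ^ n := by rwa [div_pow, le_div_iff₀ (by positivity)] at hn
  calc a ^ n * d ^ (n ^ 2) = (a * d ^ n) ^ n := by rw [mul_pow, ← pow_mul, sq]
    _ ≤ (b ^ n) ^ n := by gcongr
    _ = b ^ (n ^ 2) := by rw [← pow_mul, sq]

lemma eventually_pow_sq_le_two_pow_choose_two {c : ℝ} (hc : 0 < c) (hc2 : c < √2) :
    ∀ᶠ n : ℕ in atTop, c ^ (n ^ 2) ≤ 2 ^ (n - 1).choose 2 := by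
  have hcsq : c ^ 2 < 2 := (Real.lt_sqrt hc.le).1 hc2
  filter_upwards [eventually_pow_mul_pow_sq_le (by norm_num : (0 : ℝ) ≤ 8) (by positivity) hcsq]
    with n hn
  set k := (n - 1).choose 2
  have hpow : (2 : ℝ) ^ (n ^ 2) ≤ 8 ^ n * 4 ^ k := by
    calc (2 : ℝ) ^ (n ^ 2) ≤ 2 ^ (2 * k + 3 * n) :=
          pow_le_pow_right₀ one_le_two (sq_le_two_mul_choose_two_add n)
      _ = 8 ^ n * 4 ^ k := by rw [pow_add, pow_mul, pow_mul]; norm_num; ring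
  have hsq : (c ^ 2) ^ (n ^ 2) ≤ 4 ^ k := le_of_mul_le_mul_left (hn.trans hpow) (by positivity)
  refine (pow_le_pow_iff_left₀ (by positivity) (by positivity) two_ne_zero).1 ?_
  calc (c ^ (n ^ 2)) ^ 2 = (c ^ 2) ^ (n ^ 2) := by ring
    _ ≤ 4 ^ k := hsq
    _ = (2 ^ k) ^ 2 := by rw [← pow_mul, mul_comm, pow_mul]; norm_num

/-- For every real `c` with `1 < c < √2` there exists `N` such that
for all `n ≥ N` the number of directed simple graphs on `n` labelled vertices is at
least `c^(n²)`.  In particular, there exists a constant `c > 1` such that this number is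
at least `c^(n²)` for all sufficiently large `n`. -/
theorem statement10 :
    (∀ c : ℝ, 1 < c → c < Real.sqrt 2 → ∃ N : ℕ, ∀ n ≥ N,
      c ^ (n ^ 2) ≤ (Nat.card {R : Fin n → Fin n → Prop // IsDSrel n R} : ℝ)) ∧
    (∃ c : ℝ, 1 < c ∧ ∃ N : ℕ, ∀ n ≥ N,
      c ^ (n ^ 2) ≤ (Nat.card {R : Fin n → Fin n → Prop // IsDSrel n R} : ℝ)) := by
  have lower : ∀ c : ℝ, 1 < c → c < √2 → ∃ N : ℕ, ∀ n ≥ N,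
      c ^ (n ^ 2) ≤ (Nat.card {R : Fin n → Fin n → Prop // IsDSrel n R} : ℝ) := by
    intro c hc1 hc2
    obtain ⟨N, hN⟩ := eventually_atTop.1 <|
      (eventually_pow_sq_le_two_pow_choose_two (by linarith) hc2).and (eventually_ge_atTop 1)
    refine ⟨N, fun n hn => ?_⟩
    obtain ⟨hle, hn1⟩ := hN n hn
    obtain ⟨m, rfl⟩ := Nat.exists_eq_add_one_of_ne_zero (by omega : n ≠ 0)
    rw [Nat.add_sub_cancel] at hle
    exact hle.trans (by exact_mod_cast two_pow_choose_two_le_card m)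
  exact ⟨lower, 5 / 4, by norm_num,
    lower _ (by norm_num) ((Real.lt_sqrt (by norm_num)).2 (by norm_num))⟩
end
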